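/- arXiv:2312.05938 — 4 statements merged into one kernel-verified Lean document; each statement's English description precedes it below -/
import Mathlib

section
/- Let s ≥ 1 be an integer, let k be a squarefree positive integer, and let m, n be coprime positive integers. Then μ(k)·c_k^{(s)}(mn) = (μ(k)·c_k^{(s)}(m)) · (μ(k)·c_k^{(s)}(n)), where μ is the Möbius function. In other words, the function n ↦ μ(k)·c_k^{(s)}(n) is multiplicative in n when k is squarefree. -/
open scoped BigOperators
open ArithmeticFunction
open scoped ArithmeticFunction.Moebius

/-- Generalized gcd `(a,b)_s`: the largest `d ^ s` (with `d` a positive integer)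
dividing both `a` and `b`. -/
def ggcd (s a b : ℕ) : ℕ :=
  (Nat.findGreatest (fun d => d ^ s ∣ a ∧ d ^ s ∣ b) (max a b)) ^ s

/-- The Cohen–Ramanujan sum `c_k^{(s)}(n) = Σ_{h=1, (h,k^s)_s=1}^{k^s} e^{2πinh/k^s}`. -/
noncomputable def CRS (s k n : ℕ) : ℂ :=
  ∑ h ∈ Finset.Icc 1 (k ^ s),
    if ggcd s h (k ^ s) = 1 then
      Complex.exp (2 * Real.pi * Complex.I * n * h / (k ^ s))
    else 0

/-- The core of `k`: its largest squarefree divisor. -/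
def core (k : ℕ) : ℕ := ∏ p ∈ k.primeFactors, p

/-- `k* = k / k̄`. -/
def spart (k : ℕ) : ℕ := k / core k

/-- `ξ_d(k) = d` if `d ∣ k`, and `0` otherwise. -/
def xi (d k : ℕ) : ℕ := if d ∣ k then d else 0

/-- Klee's function `Φ_s(n) = n ∏_{p prime, p^s ∣ n} (1 - 1/p^s)`. -/
noncomputable def Klee (s n : ℕ) : ℂ :=
  n * ∏ p ∈ n.primeFactors.filter (fun p => p ^ s ∣ n), (1 - 1 / (p : ℂ) ^ s)

/-- The Jordan totient function `J_s(n) = n^s ∏_{p ∣ n} (1 - 1/p^s)` (as a complex number). -/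
noncomputable def Jordan (s n : ℕ) : ℂ :=
  (n : ℂ) ^ s * ∏ p ∈ n.primeFactors, (1 - 1 / (p : ℂ) ^ s)

/-!
For squarefree `k`, `(h, k^s)_s = 1` says that no `p^s` with `p ∣ k` divides `h`, so its
indicator is `∏_{p ∣ k} (1 - [p^s ∣ h])`. Expanding this product over the subsets of the prime
factors of `k` turns `c_k^{(s)}(n)` into a signed sum of exponential sums over the multiples of
`d^s`, `d ∣ k`; each is a geometric series equal to `(k/d)^s [(k/d)^s ∣ n]`. Folding the signed
sum back into a product gives `μ(k) c_k^{(s)}(n) = ∏_{p ∣ k} (1 - p^s [p^s ∣ n])`, and each factor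
is multiplicative in `n`, since a prime power divides a product of coprime numbers iff it divides
exactly one of them.
-/

open Finset Complex
open scoped Real

theorem sum_Icc_pow_eq_sum_range {R : Type*} [CommRing R] {x : R} {M : ℕ} (hx : x ^ M = 1) :
    ∑ j ∈ Icc 1 M, x ^ j = ∑ j ∈ range M, x ^ j := by
  have h := (sum_range_succ (x ^ ·) M).symm.trans (sum_range_succ' (x ^ ·) M)
  rw [hx, pow_zero, add_left_inj] at h
  rw [h, ← Ico_add_one_right_eq_Icc, sum_Ico_eq_sum_range]
  simp [add_comm]

theorem sum_Icc_exp_eq_ite (M n : ℕ) :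
    ∑ j ∈ Icc 1 M, exp (2 * π * I * n * j / M) = if M ∣ n then (M : ℂ) else 0 := by
  rcases eq_or_ne M 0 with rfl | hM
  · simp
  have hζ := isPrimitiveRoot_exp M hM
  have hterm (j : ℕ) : exp (2 * π * I * n * j / M) = (exp (2 * π * I / M) ^ n) ^ j := by
    rw [← pow_mul, ← exp_nat_mul]
    push_cast
    ring_nf
  have hxM : (exp (2 * π * I / M) ^ n) ^ M = 1 := by
    rw [pow_right_comm, hζ.pow_eq_one, one_pow]
  simp only [hterm, sum_Icc_pow_eq_sum_range hxM]
  split_ifs with hdvd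
  · simp [(hζ.pow_eq_one_iff_dvd n).mpr hdvd]
  · rw [geom_sum_eq (mt (hζ.pow_eq_one_iff_dvd n).mp hdvd) M, hxM, sub_self, zero_div]

theorem sum_Icc_ite_dvd_exp (D M n : ℕ) (hD : D ≠ 0) :
    ∑ h ∈ Icc 1 (D * M), (if D ∣ h then exp (2 * π * I * n * h / (D * M : ℕ)) else 0) =
      if M ∣ n then (M : ℂ) else 0 := by
  have hD' : 0 < D := Nat.pos_of_ne_zero hD
  rw [← sum_Icc_exp_eq_ite, ← sum_filter]
  refine sum_nbij' (· / D) (D * ·) ?_ ?_ ?_ ?_ ?_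
  · intro h hh
    obtain ⟨hIcc, j, rfl⟩ := mem_filter.mp hh
    rw [mem_Icc, Nat.mul_le_mul_left_iff hD'] at hIcc
    rw [mem_Icc, Nat.mul_div_cancel_left j hD']
    exact ⟨Nat.one_le_iff_ne_zero.mpr (by rintro rfl; simp at hIcc), hIcc.2⟩
  · intro j hj
    rw [mem_Icc] at hj
    refine mem_filter.mpr ⟨mem_Icc.mpr ⟨?_, Nat.mul_le_mul_left D hj.2⟩, dvd_mul_right D j⟩
    exact Nat.one_le_iff_ne_zero.mpr (mul_ne_zero hD (by omega))
  · intro h hh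
    exact Nat.mul_div_cancel' (mem_filter.mp hh).2
  · intro j _
    exact Nat.mul_div_cancel_left j hD'
  · intro h hh
    obtain ⟨-, j, rfl⟩ := mem_filter.mp hh
    rw [Nat.mul_div_cancel_left j hD']
    push_cast
    rw [show (2 * π * I * n * (D * j) : ℂ) = D * (2 * π * I * n * j) by ring,
      mul_div_mul_left _ _ (Nat.cast_ne_zero.mpr hD)]

theorem ggcd_eq_one_iff {s a b : ℕ} (hs : s ≠ 0) (hb : b ≠ 0) :
    ggcd s a b = 1 ↔ ∀ d, d ^ s ∣ a → d ^ s ∣ b → d = 1 := by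
  rw [ggcd, pow_eq_one_iff_left hs]
  have hb1 : 1 ≤ max a b := le_max_of_le_right (Nat.one_le_iff_ne_zero.mpr hb)
  constructor
  · intro hG d hda hdb
    have hd0 : d ≠ 0 := by rintro rfl; simp [zero_pow hs, hb] at hdb
    have hdb' : d ≤ max a b := le_max_of_le_right
      ((Nat.le_self_pow hs d).trans (Nat.le_of_dvd (Nat.pos_of_ne_zero hb) hdb))
    exact le_antisymm (hG ▸ Nat.le_findGreatest hdb' ⟨hda, hdb⟩)
      (Nat.one_le_iff_ne_zero.mpr hd0)
  · intro h
    have hspec := Nat.findGreatest_spec hb1 (P := fun d => d ^ s ∣ a ∧ d ^ s ∣ b) (by simp)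
    exact h _ hspec.1 hspec.2

theorem ggcd_pow_eq_one_iff {s h k : ℕ} (hs : s ≠ 0) (hk : k ≠ 0) :
    ggcd s h (k ^ s) = 1 ↔ ∀ p ∈ k.primeFactors, ¬ p ^ s ∣ h := by
  rw [ggcd_eq_one_iff hs (pow_ne_zero s hk)]
  simp only [Nat.pow_dvd_pow_iff hs]
  constructor
  · intro H p hp hph
    exact (Nat.prime_of_mem_primeFactors hp).one_lt.ne' (H p hph (Nat.dvd_of_mem_primeFactors hp))
  · intro H d hdh hdk
    by_contra hd1
    have hp : d.minFac ∈ k.primeFactors :=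
      Nat.mem_primeFactors.mpr ⟨Nat.minFac_prime hd1, (Nat.minFac_dvd d).trans hdk, hk⟩
    exact H _ hp ((pow_dvd_pow_of_dvd (Nat.minFac_dvd d) s).trans hdh)

theorem prod_primes_pow_dvd_iff {T : Finset ℕ} (hT : ∀ p ∈ T, p.Prime) (s h : ℕ) :
    (∏ p ∈ T, p) ^ s ∣ h ↔ ∀ p ∈ T, p ^ s ∣ h := by
  induction T using Finset.induction_on with
  | empty => simp
  | insert a T ha ih =>
    rw [forall_mem_insert] at hT
    rw [prod_insert ha, mul_pow, forall_mem_insert, ← ih hT.2]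
    have hcop : (a ^ s).Coprime ((∏ p ∈ T, p) ^ s) :=
      (Nat.Coprime.prod_right fun p hp =>
        (Nat.coprime_primes hT.1 (hT.2 p hp)).mpr (ne_of_mem_of_not_mem hp ha).symm).pow s s
    exact ⟨fun hd => ⟨(dvd_mul_right _ _).trans hd, (dvd_mul_left _ _).trans hd⟩,
      fun hd => hcop.mul_dvd_of_dvd_of_dvd hd.1 hd.2⟩

theorem moebius_cast_eq_neg_one_pow {R : Type*} [CommRing R] {k : ℕ} (hk : Squarefree k) :
    (μ k : R) = (-1) ^ #k.primeFactors := by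
  rw [← isMultiplicative_moebius.prod_primeFactors hk, Int.cast_prod, ← prod_const]
  exact prod_congr rfl fun p hp => by
    rw [moebius_apply_prime (Nat.prime_of_mem_primeFactors hp), Int.cast_neg, Int.cast_one]

theorem moebius_mul_ite_ggcd_eq_one {s k : ℕ} (hs : s ≠ 0) (hk : Squarefree k) (h : ℕ) :
    (μ k : ℂ) * (if ggcd s h (k ^ s) = 1 then 1 else 0) =
      ∑ t ∈ k.primeFactors.powerset,
        (-1) ^ #t * if (∏ p ∈ k.primeFactors \ t, p) ^ s ∣ h then 1 else 0 := by
  simp only [ggcd_pow_eq_one_iff hs hk.ne_zero]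
  rw [moebius_cast_eq_neg_one_pow hk, ← prod_const, ← prod_boole, ← prod_mul_distrib]
  -- The sign `μ k` turns each factor into `[p^s ∣ h] - 1`, so that expanding the product leaves
  -- the indicators on the complement of `t`.
  calc ∏ p ∈ k.primeFactors, (-1) * (if ¬ p ^ s ∣ h then (1 : ℂ) else 0)
      = ∏ p ∈ k.primeFactors, ((if p ^ s ∣ h then 1 else 0) - 1) :=
        prod_congr rfl fun p _ => by split_ifs <;> simp
    _ = _ := by
        rw [prod_sub]
        refine sum_congr rfl fun t ht => ?_
        rw [prod_const_one, mul_one, prod_boole]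
        simp only [prod_primes_pow_dvd_iff fun p hp =>
          Nat.prime_of_mem_primeFactors (sdiff_subset hp)]

theorem sum_powerset_neg_one_pow_mul_ite_pow_dvd {P : Finset ℕ} (hP : ∀ p ∈ P, p.Prime)
    (s n : ℕ) :
    ∑ t ∈ P.powerset,
        (-1) ^ #t * (if (∏ p ∈ t, p) ^ s ∣ n then ((∏ p ∈ t, p) ^ s : ℕ) else 0 : ℂ) =
      ∏ p ∈ P, (1 - if p ^ s ∣ n then (p : ℂ) ^ s else 0) := by
  rw [prod_sub]
  refine sum_congr rfl fun t ht => ?_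
  rw [prod_const_one, mul_one, prod_ite_zero]
  simp only [prod_primes_pow_dvd_iff (fun p hp => hP p (mem_powerset.mp ht hp))]
  push_cast
  rw [prod_pow]

theorem moebius_mul_CRS_eq_prod {s k : ℕ} (hs : s ≠ 0) (hk : Squarefree k) (n : ℕ) :
    (μ k : ℂ) * CRS s k n =
      ∏ p ∈ k.primeFactors, (1 - if p ^ s ∣ n then (p : ℂ) ^ s else 0) := by
  set P := k.primeFactors
  have hP : ∀ p ∈ P, p.Prime := fun p hp => Nat.prime_of_mem_primeFactors hp
  set e : ℕ → ℂ := fun h => exp (2 * π * I * n * h / (k ^ s))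
  have hsplit (t) (ht : t ∈ P.powerset) :
      k ^ s = (∏ p ∈ P \ t, p) ^ s * (∏ p ∈ t, p) ^ s := by
    rw [← mul_pow, prod_sdiff (mem_powerset.mp ht), Nat.prod_primeFactors_of_squarefree hk]
  calc (μ k : ℂ) * CRS s k n
      = ∑ h ∈ Icc 1 (k ^ s), (μ k : ℂ) * (if ggcd s h (k ^ s) = 1 then 1 else 0) * e h := by
        rw [CRS, mul_sum]
        refine sum_congr rfl fun h _ => ?_
        split_ifs <;> simp [e]
    _ = ∑ t ∈ P.powerset, (-1) ^ #t *
          ∑ h ∈ Icc 1 (k ^ s), if (∏ p ∈ P \ t, p) ^ s ∣ h then e h else 0 := by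
        simp only [moebius_mul_ite_ggcd_eq_one hs hk, sum_mul, mul_sum, mul_assoc, ite_mul,
          one_mul, zero_mul]
        exact sum_comm
    _ = ∑ t ∈ P.powerset, (-1) ^ #t *
          (if (∏ p ∈ t, p) ^ s ∣ n then ((∏ p ∈ t, p) ^ s : ℕ) else 0 : ℂ) := by
        refine sum_congr rfl fun t ht => ?_
        rw [← sum_Icc_ite_dvd_exp _ _ n (pow_ne_zero s (prod_ne_zero_iff.mpr fun p hp =>
          (hP p (sdiff_subset hp)).ne_zero)), ← hsplit t ht]
        push_cast
        rfl
    _ = _ := sum_powerset_neg_one_pow_mul_ite_pow_dvd hP s n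

theorem one_sub_ite_dvd_mul {R : Type*} [CommRing R] {q m n : ℕ} (hq : IsPrimePow q)
    (hmn : m.Coprime n) (x : R) :
    (1 - if q ∣ m * n then x else 0) =
      (1 - if q ∣ m then x else 0) * (1 - if q ∣ n then x else 0) := by
  have hnot : ¬ (q ∣ m ∧ q ∣ n) := fun ⟨hm, hn⟩ =>
    hq.ne_one (Nat.eq_one_of_dvd_one (hmn ▸ Nat.dvd_gcd hm hn))
  by_cases hm : q ∣ m <;> by_cases hn : q ∣ n <;> simp_all [hmn.isPrimePow_dvd_mul hq]

theorem moebius_CRS_multiplicative_general (s : ℕ) (hs : 1 ≤ s) (k : ℕ)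
    (hksf : Squarefree k) (m n : ℕ)
    (hcop : Nat.Coprime m n) :
    (μ k : ℂ) * CRS s k (m * n) =
      ((μ k : ℂ) * CRS s k m) * ((μ k : ℂ) * CRS s k n) := by
  have hs0 : s ≠ 0 := Nat.one_le_iff_ne_zero.mp hs
  simp only [moebius_mul_CRS_eq_prod hs0 hksf, ← prod_mul_distrib]
  exact prod_congr rfl fun p hp =>
    one_sub_ite_dvd_mul ((Nat.prime_of_mem_primeFactors hp).isPrimePow.pow hs0) hcop _

/-- For squarefree `k` and coprime `m, n`, the function `n ↦ μ(k)·c_k^{(s)}(n)` is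
multiplicative: `μ(k)·c_k^{(s)}(mn) = (μ(k)·c_k^{(s)}(m)) · (μ(k)·c_k^{(s)}(n))`. -/
theorem moebius_CRS_multiplicative (s : ℕ) (hs : 1 ≤ s) (k : ℕ) (hk : 0 < k)
    (hksf : Squarefree k) (m n : ℕ) (hm : 0 < m) (hn : 0 < n)
    (hcop : Nat.Coprime m n) :
    (μ k : ℂ) * CRS s k (m * n) =
      ((μ k : ℂ) * CRS s k m) * ((μ k : ℂ) * CRS s k n) :=
  moebius_CRS_multiplicative_general s hs k hksf m n hcop
end

section
/- Let s ≥ 1 be an integer and let k and n be positive integers. Then the reciprocity relation (μ(k̄)/(k*)^s) · c_k^{(s)}(n^s·(k*)^s) = (μ(n̄)/(n*)^s) · c_n^{(s)}(k^s·(n*)^s) holds, where k̄ (resp. n̄) is the largest squarefree divisor of k (resp. n), k* = k/k̄ and n* = n/n̄, and μ is the Möbius function. -/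
open scoped BigOperators
open ArithmeticFunction
open scoped ArithmeticFunction.Moebius

/-!
Möbius inversion over the `d` with `d ^ s ∣ h` detects `(h, k^s)_s = 1`, and summing the roots of
unity over each residue class gives the Hölder-type formula
`c_k^{(s)}(N) = ∑_{d ∣ k} μ(d) (k/d)^s [(k/d)^s ∣ N]`.
For `N = (n k*)^s` only squarefree `d`, i.e. `d ∣ k̄`, contribute, the condition becomes `k̄/d ∣ n`,
and the prefactor `μ(k̄)/(k*)^s` collapses the sum to `∑_{u ∣ (k̄, n̄)} μ(u) u^s`,
which is symmetric in `k` and `n`.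
-/

open Finset UniqueFactorizationMonoid

theorem Nat.dvd_findGreatest_iff_of_lcm_closed {P : ℕ → Prop} [DecidablePred P] {B d : ℕ}
    (h_one : P 1) (h_le : ∀ a, P a → a ≤ B) (h_lcm : ∀ a b, P a → P b → P (Nat.lcm a b))
    (h_dvd : ∀ a b, a ∣ b → P b → P a) :
    d ∣ Nat.findGreatest P B ↔ P d := by
  set m := Nat.findGreatest P B
  have hm : P m := Nat.findGreatest_spec (h_le 1 h_one) h_one
  refine ⟨fun hd => h_dvd d m hd hm, fun hd => ?_⟩
  have hL : P (Nat.lcm d m) := h_lcm d m hd hm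
  -- `P 0` would force `P (B + 1)`, contradicting the bound
  have hL0 : Nat.lcm d m ≠ 0 := fun h0 =>
    absurd (h_le (B + 1) (h_dvd _ 0 (dvd_zero _) (h0 ▸ hL))) (by omega)
  have hLm : Nat.lcm d m = m :=
    le_antisymm (Nat.le_findGreatest (h_le _ hL) hL)
      (Nat.le_of_dvd (Nat.pos_of_ne_zero hL0) (Nat.dvd_lcm_right d m))
  exact hLm ▸ Nat.dvd_lcm_left d m

theorem exists_ggcd_eq_pow {s a : ℕ} (hs : s ≠ 0) (ha : a ≠ 0) (b : ℕ) :
    ∃ m, ggcd s a b = m ^ s ∧ ∀ d, d ∣ m ↔ d ^ s ∣ a ∧ d ^ s ∣ b := by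
  refine ⟨_, rfl, fun d => Nat.dvd_findGreatest_iff_of_lcm_closed (by simp) ?_ ?_ ?_⟩
  · intro c hc
    exact le_max_of_le_left ((Nat.le_self_pow hs c).trans (Nat.le_of_dvd (by omega) hc.1))
  · rintro c e ⟨hca, hcb⟩ ⟨hea, heb⟩
    rw [← Nat.pow_lcm_pow]
    exact ⟨Nat.lcm_dvd hca hea, Nat.lcm_dvd hcb heb⟩
  · rintro c e hce ⟨hea, heb⟩
    exact ⟨(pow_dvd_pow_of_dvd hce s).trans hea, (pow_dvd_pow_of_dvd hce s).trans heb⟩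

theorem sum_divisors_moebius {R : Type*} [Ring R] (m : ℕ) :
    ∑ d ∈ m.divisors, (μ d : R) = if m = 1 then 1 else 0 := by
  have h := congrArg (fun f => f m) (ArithmeticFunction.coe_moebius_mul_coe_zeta (R := R))
  simp only [ArithmeticFunction.coe_mul_zeta_apply, ArithmeticFunction.intCoe_apply] at h
  rw [h, ArithmeticFunction.one_apply]

theorem ite_ggcd_eq_one_eq_sum_moebius {R : Type*} [Ring R] {s k h : ℕ} (hs : s ≠ 0)
    (hk : k ≠ 0) (hh : h ≠ 0) :
    (if ggcd s h (k ^ s) = 1 then (1 : R) else 0) =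
      ∑ d ∈ k.divisors with d ^ s ∣ h, (μ d : R) := by
  obtain ⟨m, hggcd, hm⟩ := exists_ggcd_eq_pow hs hh (k ^ s)
  have hm0 : m ≠ 0 := fun h0 => hh (by simpa [zero_pow hs] using ((hm 0).mp (h0 ▸ dvd_rfl)).1)
  have hdivisors : {d ∈ k.divisors | d ^ s ∣ h} = m.divisors := by
    ext d
    simp only [mem_filter, Nat.mem_divisors, hm, Nat.pow_dvd_pow_iff hs]
    tauto
  rw [hdivisors, sum_divisors_moebius]
  simp only [hggcd, pow_eq_one_iff_left hs]

theorem sum_Icc_filter_dvd {M : Type*} [AddCommMonoid M] (f : ℕ → M) {a : ℕ} (ha : a ≠ 0)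
    (b : ℕ) : ∑ h ∈ Icc 1 (a * b) with a ∣ h, f h = ∑ j ∈ Icc 1 b, f (a * j) := by
  have hset : {h ∈ Icc 1 (a * b) | a ∣ h} = (Icc 1 b).image (a * ·) := by
    ext h
    simp only [mem_filter, mem_Icc, mem_image]
    constructor
    · rintro ⟨⟨h1, h2⟩, j, rfl⟩
      exact ⟨j, ⟨Nat.pos_of_mul_pos_left h1, Nat.le_of_mul_le_mul_left h2 (by omega)⟩, rfl⟩
    · rintro ⟨j, ⟨hj1, hj2⟩, rfl⟩
      exact ⟨⟨Nat.mul_pos (by omega) hj1, Nat.mul_le_mul_left a hj2⟩, dvd_mul_right a j⟩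
  rw [hset, sum_image fun x _ y _ hxy => Nat.eq_of_mul_eq_mul_left (by omega) hxy]

theorem sum_Icc_pow_eq_mul_geom_sum {R : Type*} [Semiring R] (w : R) (M : ℕ) :
    ∑ j ∈ Icc 1 M, w ^ j = w * ∑ j ∈ range M, w ^ j := by
  rw [← Ico_add_one_right_eq_Icc, sum_Ico_eq_sum_range, mul_sum]
  simp [pow_succ', add_comm]

theorem IsPrimitiveRoot.sum_Icc_pow_mul {R : Type*} [CommRing R] [IsDomain R] {ζ : R} {M : ℕ}
    (hζ : IsPrimitiveRoot ζ M) (N : ℕ) :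
    ∑ j ∈ Icc 1 M, ζ ^ (N * j) = if M ∣ N then (M : R) else 0 := by
  simp only [pow_mul, sum_Icc_pow_eq_mul_geom_sum]
  split_ifs with hMN
  · simp [(hζ.pow_eq_one_iff_dvd N).mpr hMN]
  · have hw : ζ ^ N - 1 ≠ 0 := sub_ne_zero.mpr fun h => hMN ((hζ.pow_eq_one_iff_dvd N).mp h)
    have hwM : (ζ ^ N) ^ M = 1 := by rw [← pow_mul, mul_comm, pow_mul, hζ.pow_eq_one, one_pow]
    have hgeom := geom_sum_mul (ζ ^ N) M
    rw [hwM, sub_self] at hgeom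
    simp [(mul_eq_zero.mp hgeom).resolve_right hw]

theorem IsPrimitiveRoot.sum_Icc_ggcd_eq_one {R : Type*} [CommRing R] [IsDomain R] {s k : ℕ}
    (hs : s ≠ 0) (hk : k ≠ 0) {ζ : R} (hζ : IsPrimitiveRoot ζ (k ^ s)) (N : ℕ) :
    ∑ h ∈ Icc 1 (k ^ s), (if ggcd s h (k ^ s) = 1 then ζ ^ (N * h) else 0) =
      ∑ d ∈ k.divisors, (μ d : R) * if (k / d) ^ s ∣ N then (((k / d) ^ s : ℕ) : R) else 0 := by
  calc ∑ h ∈ Icc 1 (k ^ s), (if ggcd s h (k ^ s) = 1 then ζ ^ (N * h) else 0)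
      = ∑ h ∈ Icc 1 (k ^ s), (∑ d ∈ k.divisors with d ^ s ∣ h, (μ d : R)) * ζ ^ (N * h) := by
        refine sum_congr rfl fun h hh => ?_
        have hh0 : h ≠ 0 := by have := (mem_Icc.mp hh).1; omega
        rw [← ite_ggcd_eq_one_eq_sum_moebius hs hk hh0, ite_zero_mul, one_mul]
    _ = ∑ d ∈ k.divisors, (μ d : R) * ∑ h ∈ Icc 1 (k ^ s) with d ^ s ∣ h, ζ ^ (N * h) := by
        simp only [sum_filter, sum_mul, mul_sum, ite_zero_mul, mul_ite, mul_zero]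
        exact sum_comm
    _ = _ := by
        refine sum_congr rfl fun d hd => ?_
        obtain ⟨e, rfl⟩ := Nat.dvd_of_mem_divisors hd
        have hd0 : d ≠ 0 := left_ne_zero_of_mul hk
        have hde : d ^ s ∣ (d * e) ^ s := pow_dvd_pow_of_dvd (dvd_mul_right d e) s
        have hζe : IsPrimitiveRoot (ζ ^ d ^ s) (e ^ s) := by
          simpa [mul_pow, Nat.mul_div_cancel_left _ (pow_pos (Nat.pos_of_ne_zero hd0) s)]
            using hζ.pow_of_dvd (pow_ne_zero s hd0) hde
        rw [mul_pow, sum_Icc_filter_dvd _ (pow_ne_zero s hd0), Nat.mul_div_cancel_left _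
          (Nat.pos_of_ne_zero hd0)]
        have hpow (j : ℕ) : ζ ^ (N * (d ^ s * j)) = (ζ ^ d ^ s) ^ (N * j) := by
          rw [← pow_mul]; ring_nf
        simp only [hpow, hζe.sum_Icc_pow_mul N]

theorem CRS_eq_sum_divisors {s k : ℕ} (hs : s ≠ 0) (hk : k ≠ 0) (N : ℕ) :
    CRS s k N =
      ∑ d ∈ k.divisors, (μ d : ℂ) * if (k / d) ^ s ∣ N then (((k / d) ^ s : ℕ) : ℂ) else 0 := by
  have hK : k ^ s ≠ 0 := pow_ne_zero s hk
  rw [← (Complex.isPrimitiveRoot_exp _ hK).sum_Icc_ggcd_eq_one hs hk N, CRS]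
  refine sum_congr rfl fun h _ => ?_
  rw [← Complex.exp_nat_mul]
  congr 2
  push_cast
  ring

theorem core_eq_radical (k : ℕ) : core k = radical k :=
  Nat.radical_eq_prod_primeFactors.symm

theorem core_pos (k : ℕ) : 0 < core k :=
  core_eq_radical k ▸ Nat.radical_pos k

theorem squarefree_core (k : ℕ) : Squarefree (core k) :=
  core_eq_radical k ▸ squarefree_radical

theorem core_mul_spart (k : ℕ) : core k * spart k = k :=
  Nat.mul_div_cancel' (core_eq_radical k ▸ radical_dvd_self)

theorem spart_ne_zero {k : ℕ} (hk : k ≠ 0) : spart k ≠ 0 :=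
  right_ne_zero_of_mul ((core_mul_spart k).symm ▸ hk)

theorem sum_divisors_moebius_mul_eq_sum_divisors_radical {R : Type*} [Ring R] {k : ℕ}
    (hk : k ≠ 0) (f : ℕ → R) :
    ∑ d ∈ k.divisors, (μ d : R) * f d = ∑ d ∈ (radical k).divisors, (μ d : R) * f d := by
  refine (sum_subset (Nat.divisors_subset_of_dvd hk radical_dvd_self) fun d hdk hdr => ?_).symm
  have hd : ¬Squarefree d := fun hsq => hdr <| Nat.mem_divisors.mpr
    ⟨(dvd_radical_iff hsq.isRadical hk).mpr (Nat.dvd_of_mem_divisors hdk), radical_ne_zero⟩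
  simp [moebius_eq_zero_of_not_squarefree hd]

theorem moebius_mul_moebius_div {c u : ℕ} (hc : Squarefree c) (hu : u ∣ c) :
    μ c * μ (c / u) = μ u := by
  obtain ⟨v, rfl⟩ := hu
  have hu0 : u ≠ 0 := left_ne_zero_of_mul hc.ne_zero
  rw [Nat.mul_div_cancel_left v (Nat.pos_of_ne_zero hu0),
    isMultiplicative_moebius.map_mul_of_coprime (Nat.coprime_of_squarefree_mul hc), mul_assoc,
    ← sq, moebius_sq_eq_one_of_squarefree (hc.of_mul_right), mul_one]

theorem CRS_pow_mul_spart {s k : ℕ} (hs : s ≠ 0) (hk : k ≠ 0) (m : ℕ) :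
    CRS s k ((m * spart k) ^ s) = (spart k : ℂ) ^ s *
      ∑ u ∈ (core k).divisors, (μ (core k / u) : ℂ) * if u ∣ m then (u : ℂ) ^ s else 0 := by
  rw [CRS_eq_sum_divisors hs hk, sum_divisors_moebius_mul_eq_sum_divisors_radical hk,
    ← core_eq_radical, ← Nat.sum_div_divisors, mul_sum]
  refine sum_congr rfl fun u hu => ?_
  have huc : u ∣ core k := Nat.dvd_of_mem_divisors hu
  have hcu : 0 < core k / u := Nat.pos_of_dvd_of_pos (Nat.div_dvd_of_dvd huc) (core_pos k)
  have hkdiv : k / (core k / u) = u * spart k := Nat.div_eq_of_eq_mul_right hcu <| by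
    rw [← mul_assoc, Nat.div_mul_cancel huc, core_mul_spart]
  simp only [hkdiv, Nat.pow_dvd_pow_iff hs,
    Nat.mul_dvd_mul_iff_right (Nat.pos_of_ne_zero (spart_ne_zero hk))]
  split_ifs <;> push_cast <;> ring

theorem divisors_gcd_core_eq_filter {k n : ℕ} (hn : n ≠ 0) :
    (Nat.gcd (core k) (core n)).divisors = {u ∈ (core k).divisors | u ∣ n} := by
  have hk : core k ≠ 0 := (core_pos k).ne'
  ext u
  simp only [mem_filter, Nat.mem_divisors, Nat.dvd_gcd_iff, ne_eq, hk, Nat.gcd_eq_zero_iff,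
    false_and, not_false_eq_true, and_true]
  refine and_congr_right fun huk => ?_
  rw [core_eq_radical, dvd_radical_iff ((squarefree_core k).squarefree_of_dvd huk).isRadical hn]

theorem moebius_core_div_spart_pow_mul_CRS {s k n : ℕ} (hs : s ≠ 0) (hk : k ≠ 0) (hn : n ≠ 0) :
    ((μ (core k) : ℂ) / (spart k : ℂ) ^ s) * CRS s k (n ^ s * (spart k) ^ s) =
      ∑ u ∈ (Nat.gcd (core k) (core n)).divisors, (μ u : ℂ) * (u : ℂ) ^ s := by
  have hspart : (spart k : ℂ) ^ s ≠ 0 := pow_ne_zero s (Nat.cast_ne_zero.mpr (spart_ne_zero hk))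
  rw [← mul_pow, CRS_pow_mul_spart hs hk, ← mul_assoc, div_mul_cancel₀ _ hspart, mul_sum,
    divisors_gcd_core_eq_filter hn, sum_filter]
  refine sum_congr rfl fun u hu => ?_
  rw [← mul_assoc, ← Int.cast_mul,
    moebius_mul_moebius_div (squarefree_core k) (Nat.dvd_of_mem_divisors hu)]
  split_ifs <;> simp

/-- Reciprocity theorem:
`(μ(k̄)/(k*)^s)·c_k^{(s)}(n^s·(k*)^s) = (μ(n̄)/(n*)^s)·c_n^{(s)}(k^s·(n*)^s)`. -/
theorem CRS_reciprocity (s : ℕ) (hs : 1 ≤ s) (k n : ℕ) (hk : 0 < k) (hn : 0 < n) :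
    ((μ (core k) : ℂ) / (spart k : ℂ) ^ s) * CRS s k (n ^ s * (spart k) ^ s) =
      ((μ (core n) : ℂ) / (spart n : ℂ) ^ s) * CRS s n (k ^ s * (spart n) ^ s) := by
  rw [moebius_core_div_spart_pow_mul_CRS (by omega) hk.ne' hn.ne',
    moebius_core_div_spart_pow_mul_CRS (by omega) hn.ne' hk.ne', Nat.gcd_comm]
end

section
/- Let s ≥ 1 be an integer. Klee's function satisfies Φ_s(n) = n·Σ_{d : d^s | n} μ(d)/d^s for every positive integer n, where μ is the Möbius function. -/
open scoped BigOperators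
open ArithmeticFunction
open scoped ArithmeticFunction.Moebius

/-! Since `μ` vanishes off the squarefree numbers, only the squarefree `d` with `d ^ s ∣ n`
contribute to the sum, and these are exactly the divisors of the squarefree number
`r = ∏_{p ^ s ∣ n} p`. Over the divisors of a squarefree `r`, the sum of `μ(d) f(d)` for the
multiplicative function `f(d) = d⁻ˢ` is the Euler product `∏_{p ∣ r} (1 - p⁻ˢ)`. -/

open Finset
open scoped ArithmeticFunction.zeta

def powRadical (s n : ℕ) : ℕ := ∏ p ∈ n.primeFactors with p ^ s ∣ n, p

theorem pairwise_isRelPrime_of_forall_prime {T : Finset ℕ} (hT : ∀ p ∈ T, p.Prime) :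
    (T : Set ℕ).Pairwise IsRelPrime := fun p hp q hq hpq =>
  Nat.coprime_iff_isRelPrime.mp ((Nat.coprime_primes (hT p hp) (hT q hq)).mpr hpq)

section powRadical

variable {s n : ℕ}

theorem prime_of_mem_filter_primeFactors {p : ℕ} (hp : p ∈ {p ∈ n.primeFactors | p ^ s ∣ n}) :
    p.Prime :=
  Nat.prime_of_mem_primeFactors (mem_filter.mp hp).1

theorem primeFactors_powRadical :
    (powRadical s n).primeFactors = {p ∈ n.primeFactors | p ^ s ∣ n} :=
  Nat.primeFactors_prod fun _ => prime_of_mem_filter_primeFactors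

theorem squarefree_powRadical : Squarefree (powRadical s n) :=
  squarefree_prod_of_pairwise_isCoprime
    (pairwise_isRelPrime_of_forall_prime fun _ => prime_of_mem_filter_primeFactors)
    fun _ hp => (prime_of_mem_filter_primeFactors hp).squarefree

theorem powRadical_dvd : powRadical s n ∣ n :=
  (prod_dvd_prod_of_subset _ _ _ (filter_subset _ _)).trans (Nat.prod_primeFactors_dvd n)

theorem powRadical_pow_dvd : powRadical s n ^ s ∣ n := by
  rw [powRadical, ← prod_pow]
  exact prod_dvd_of_isRelPrime
    ((pairwise_isRelPrime_of_forall_prime fun _ => prime_of_mem_filter_primeFactors).mono'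
      fun _ _ h => h.pow)
    fun p hp => (mem_filter.mp hp).2

theorem Squarefree.dvd_powRadical_iff {d : ℕ} (hd : Squarefree d) (hn : n ≠ 0) :
    d ∣ powRadical s n ↔ d ∣ n ∧ d ^ s ∣ n := by
  refine ⟨fun h => ⟨h.trans powRadical_dvd, (pow_dvd_pow_of_dvd h s).trans powRadical_pow_dvd⟩,
    fun ⟨hdn, hds⟩ => ?_⟩
  rw [← Nat.prod_primeFactors_of_squarefree hd]
  refine prod_dvd_prod_of_subset _ _ _ fun p hp => mem_filter.mpr ⟨?_, ?_⟩
  · exact Nat.primeFactors_mono hdn hn hp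
  · exact (pow_dvd_pow_of_dvd (Nat.dvd_of_mem_primeFactors hp) s).trans hds

end powRadical

section Moebius

variable {R : Type*} [CommRing R]

theorem sum_moebius_mul_eq_sum_filter_squarefree (S : Finset ℕ) (g : ℕ → R) :
    ∑ d ∈ S, (μ d : R) * g d = ∑ d ∈ S with Squarefree d, (μ d : R) * g d := by
  rw [sum_filter]
  refine sum_congr rfl fun d _ => ?_
  split_ifs with hd
  · rfl
  · simp [moebius_eq_zero_of_not_squarefree hd]

theorem sum_pow_dvd_moebius_mul_eq_sum_divisors_powRadical {s n : ℕ} (hn : n ≠ 0)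
    (g : ℕ → R) :
    ∑ d ∈ n.divisors with d ^ s ∣ n, (μ d : R) * g d =
      ∑ d ∈ (powRadical s n).divisors, (μ d : R) * g d := by
  rw [sum_moebius_mul_eq_sum_filter_squarefree]
  refine sum_congr (ext fun d => ?_) fun _ _ => rfl
  simp only [mem_filter, Nat.mem_divisors]
  constructor
  · rintro ⟨⟨⟨hdn, -⟩, hds⟩, hd⟩
    exact ⟨(hd.dvd_powRadical_iff hn).mpr ⟨hdn, hds⟩, squarefree_powRadical.ne_zero⟩
  · rintro ⟨hdr, -⟩
    have hd := squarefree_powRadical.squarefree_of_dvd hdr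
    obtain ⟨hdn, hds⟩ := (hd.dvd_powRadical_iff hn).mp hdr
    exact ⟨⟨⟨hdn, hn⟩, hds⟩, hd⟩

end Moebius

section InvPow

variable (K : Type*) [Field K]

/-- `d ↦ 1 / d ^ s`, except at `0` (where `1 / 0 ^ 0 = 1`): dividing `ζ` rather than `1`
forces the value `0` there. -/
def invPow (s : ℕ) : ArithmeticFunction K :=
  pdiv (ζ : ArithmeticFunction K) (pow s : ArithmeticFunction K)

variable {K}

theorem invPow_apply {s d : ℕ} (hd : d ≠ 0) : invPow K s d = 1 / (d : K) ^ s := by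
  simp [invPow, pow_apply, hd]

theorem isMultiplicative_invPow (s : ℕ) : (invPow K s).IsMultiplicative :=
  isMultiplicative_zeta.natCast.pdiv isMultiplicative_pow.natCast

end InvPow

theorem Klee_eq_sum_general (s : ℕ) (n : ℕ) (hn : 0 < n) :
    Klee s n = (n : ℂ) *
      ∑ d ∈ n.divisors.filter (fun d => d ^ s ∣ n), (μ d : ℂ) / (d : ℂ) ^ s := by
  have hprod : ∏ p ∈ n.primeFactors.filter (fun p => p ^ s ∣ n), (1 - 1 / (p : ℂ) ^ s) =
      ∏ p ∈ (powRadical s n).primeFactors, (1 - invPow ℂ s p) := by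
    rw [primeFactors_powRadical]
    refine prod_congr rfl fun p hp => ?_
    rw [invPow_apply (prime_of_mem_filter_primeFactors hp).ne_zero]
  have hsum : ∑ d ∈ n.divisors.filter (fun d => d ^ s ∣ n), (μ d : ℂ) / (d : ℂ) ^ s =
      ∑ d ∈ n.divisors.filter (fun d => d ^ s ∣ n), (μ d : ℂ) * invPow ℂ s d := by
    refine sum_congr rfl fun d hd => ?_
    rw [invPow_apply (Nat.pos_of_mem_divisors (mem_filter.mp hd).1).ne', mul_one_div]
  rw [Klee, hprod, hsum, sum_pow_dvd_moebius_mul_eq_sum_divisors_powRadical hn.ne',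
    (isMultiplicative_invPow s).prodPrimeFactors_one_sub_of_squarefree _ squarefree_powRadical]

/-- Klee's function satisfies `Φ_s(n) = n·Σ_{d^s ∣ n} μ(d)/d^s`. -/
theorem Klee_eq_sum (s : ℕ) (hs : 1 ≤ s) (n : ℕ) (hn : 0 < n) :
    Klee s n = (n : ℂ) *
      ∑ d ∈ n.divisors.filter (fun d => d ^ s ∣ n), (μ d : ℂ) / (d : ℂ) ^ s :=
  Klee_eq_sum_general s n hn
end

section
/- Let s ≥ 1 be an integer and let k be a positive integer. Then Σ_{d=1}^∞ μ(kd)/(kd)^{2s} = μ(k)·k^{2s} / (J_{2s}(k)·ζ(2s)·k^{2s}) simplifies to Σ_{d=1}^∞ μ(kd)/d^{2s} = μ(k)·k^{2s}/(J_{2s}(k)·ζ(2s)), where J_{2s} is the Jordan totient function, μ the Möbius function, and ζ the Riemann zeta function. -/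
open scoped BigOperators
open ArithmeticFunction
open scoped ArithmeticFunction.Moebius

/-!
`μ (k * d)` equals `μ k * μ d` when `d` is coprime to `k` and vanishes otherwise, so the series is
`μ k` times the L-series of `χ₀ * μ`, where `χ₀` is the trivial Dirichlet character mod `k`. That
L-series is the inverse of `L(χ₀, w) = ζ(w) ∏_{p ∣ k} (1 - p^{-w})`, while
`J_w(k) = k^w ∏_{p ∣ k} (1 - p^{-w})`.
-/

open scoped LSeries.notation

theorem ArithmeticFunction.moebius_mul_eq_ite (m n : ℕ) :
    μ (m * n) = if m.Coprime n then μ m * μ n else 0 := by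
  split_ifs with h
  · exact isMultiplicative_moebius.map_mul_of_coprime h
  · exact moebius_eq_zero_of_not_squarefree fun hmn => h (Nat.coprime_of_squarefree_mul hmn)

theorem DirichletCharacter.one_apply_natCast {R : Type*} [CommMonoidWithZero R] {k : ℕ}
    (d : ℕ) : (1 : DirichletCharacter R k) d = if d.Coprime k then 1 else 0 := by
  split_ifs with h
  · exact MulChar.one_apply ((ZMod.isUnit_iff_coprime d k).mpr h)
  · exact MulChar.map_nonunit _ (mt (ZMod.isUnit_iff_coprime d k).mp h)

theorem ArithmeticFunction.moebius_mul_eq_moebius_mul_trivChar {R : Type*} [CommRing R]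
    (k d : ℕ) : (μ (k * d) : R) = μ k * ((1 : DirichletCharacter R k) d * μ d) := by
  rw [moebius_mul_eq_ite, DirichletCharacter.one_apply_natCast]
  by_cases h : k.Coprime d
  · rw [if_pos h, if_pos h.symm]
    push_cast
    ring
  · rw [if_neg h, if_neg (mt Nat.Coprime.symm h)]
    simp

theorem LSeries_natCast_eq_tsum_succ (f : ℕ → ℂ) (m : ℕ) :
    L f m = ∑' d : ℕ, f (d + 1) / ((d : ℂ) + 1) ^ m := by
  rw [LSeries, ← tsum_pnat_eq_tsum_of_eq_zero (LSeries.term_zero f m), tsum_pnat_eq_tsum_succ]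
  refine tsum_congr fun d => ?_
  rw [LSeries.term_of_ne_zero (Nat.succ_ne_zero d), Complex.cpow_natCast]
  push_cast
  rfl

namespace DirichletCharacter

theorem LSeries_one_mul_moebius {k : ℕ} [NeZero k] {w : ℂ} (hw : 1 < w.re) :
    L (↗(1 : DirichletCharacter ℂ k) * ↗μ) w =
      1 / ((∏ p ∈ k.primeFactors, (1 - (p : ℂ) ^ (-w))) * riemannZeta w) := by
  have hL : L ↗(1 : DirichletCharacter ℂ k) w =
      (∏ p ∈ k.primeFactors, (1 - (p : ℂ) ^ (-w))) * riemannZeta w := by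
    rw [← LFunction_eq_LSeries _ hw]
    exact LFunctionTrivChar_eq_mul_riemannZeta (by rintro rfl; simp at hw)
  exact hL ▸ eq_one_div_of_mul_eq_one_right (LSeries.mul_mu_eq_one _ hw)

theorem LSeries_one_mul_moebius_natCast {k : ℕ} [NeZero k] {m : ℕ} (hm : 1 < m) :
    L (↗(1 : DirichletCharacter ℂ k) * ↗μ) m =
      1 / ((∏ p ∈ k.primeFactors, (1 - 1 / (p : ℂ) ^ m)) * riemannZeta m) := by
  rw [LSeries_one_mul_moebius (by simpa using hm)]
  simp_rw [Complex.cpow_neg, Complex.cpow_natCast, one_div]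

end DirichletCharacter

/-- `Σ_{d=1}^∞ μ(kd)/d^{2s} = μ(k) k^{2s}/(J_{2s}(k) ζ(2s))`. -/
theorem moebius_series_eq (s : ℕ) (hs : 1 ≤ s) (k : ℕ) (hk : 0 < k) :
    ∑' d : ℕ, (μ (k * (d + 1)) : ℂ) / ((d : ℂ) + 1) ^ (2 * s) =
      (μ k : ℂ) * (k : ℂ) ^ (2 * s) / (Jordan (2 * s) k * riemannZeta (2 * s)) := by
  have : NeZero k := ⟨hk.ne'⟩
  calc ∑' d : ℕ, (μ (k * (d + 1)) : ℂ) / ((d : ℂ) + 1) ^ (2 * s)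
      = μ k * L (↗(1 : DirichletCharacter ℂ k) * ↗μ) (2 * s : ℕ) := by
        rw [LSeries_natCast_eq_tsum_succ, ← tsum_mul_left]
        simp_rw [moebius_mul_eq_moebius_mul_trivChar k, Pi.mul_apply, mul_div_assoc]
    _ = (μ k : ℂ) * (k : ℂ) ^ (2 * s) / (Jordan (2 * s) k * riemannZeta (2 * s)) := by
        rw [DirichletCharacter.LSeries_one_mul_moebius_natCast (by omega), Jordan, mul_div_assoc,
          mul_assoc, div_mul_cancel_left₀ (pow_ne_zero _ (Nat.cast_ne_zero.mpr hk.ne')), one_div]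
        push_cast
        rfl
end
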